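/- For the relation ⊑ defined by β ⊑ α iff α = β + ω^γ for some γ > CB(β): β ⊑ α holds if and only if there is γ > CB(β) such that α is the least ordinal of Cantor-Bendixson rank γ with β ≤ α. -/

import Mathlib

open Ordinal

universe u

/-- Cantor–Bendixson rank: the last exponent of the Cantor normal form (`CB 0 = 0`). -/
noncomputable def CB (o : Ordinal) : Ordinal :=
  ((Ordinal.CNF Ordinal.omega0 o).getLast?).elim 0 Prod.fst

/-- The last coefficient of the Cantor normal form. -/
noncomputable def lastCoeff (o : Ordinal) : Ordinal :=
  ((Ordinal.CNF Ordinal.omega0 o).getLast?).elim 0 Prod.snd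

/-- The position of `o` in its fan: the last coefficient of the Cantor normal form,
with the convention `i(n) = n + 1` for natural numbers `n` (virtually omitting `0`). -/
noncomputable def placeInFan (o : Ordinal) : Ordinal :=
  if o < Ordinal.omega0 then o + 1 else lastCoeff o

/-- The anti-tree order: `treeOrd β α` iff `α = β + ω ^ γ` for some `γ > CB β`. -/
def treeOrd (β α : Ordinal) : Prop :=
  ∃ γ : Ordinal, CB β < γ ∧ α = β + Ordinal.omega0 ^ γ

/-- The immediate `treeOrd`-successor of `β`. -/
noncomputable def treeSucc (β : Ordinal) : Ordinal :=
  β + Ordinal.omega0 ^ (CB β + 1)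

/-- The set of immediate `treeOrd`-predecessors of `α`. -/
def subfan (α : Ordinal) : Set Ordinal := {γ | treeSucc γ = α}

/-- The fan of `β`: the set of immediate predecessors of the immediate successor of `β`. -/
def fan (β : Ordinal) : Set Ordinal := subfan (treeSucc β)

open Classical in
/-- The order type of a set of ordinals: the unique `δ` with `S ≃o Set.Iio δ` (0 if none). -/
noncomputable def otp (S : Set Ordinal.{u}) : Ordinal.{u} :=
  if h : ∃ δ : Ordinal.{u}, Nonempty (S ≃o Set.Iio δ) then h.choose else 0

/-- The image of `α ∈ S` under the unique order-preserving bijection of `S` with `otp S`. -/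
noncomputable def ordIndex (S : Set Ordinal) (α : Ordinal) : Ordinal :=
  otp {x | x ∈ S ∧ x < α}

/-- `I` is closed in the ordinal `δ` (with its order topology). -/
def closedIn (I : Set Ordinal) (δ : Ordinal) : Prop :=
  IsClosed {x : Set.Iio δ | (x : Ordinal) ∈ I}

/-- `X` is closed in its supremum. -/
def ClosedInSup (X : Set Ordinal) : Prop := closedIn X (sSup X)

/-- `I` is a skeleton of the ordinal `δ`. -/
def IsSkelOrd (I : Set Ordinal) (δ : Ordinal) : Prop :=
  I ⊆ Set.Iio δ ∧ closedIn I δ ∧ otp I = δ ∧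
    ∀ α ∈ I, ∀ β ∈ I, (treeOrd α β ↔ treeOrd (ordIndex I α) (ordIndex I β))

/-- `I` is a skeleton of the set `J`. -/
def IsSkelSet (I J : Set Ordinal) : Prop :=
  I ⊆ J ∧ IsSkelOrd (ordIndex J '' I) (otp J)

/-- `I` is an `n`-skeleton of the set `J`. -/
def IsNSkelSet (n : ℕ) (I J : Set Ordinal) : Prop :=
  IsSkelSet I J ∧
    ∀ α ∈ J, (fan α ∩ I).Nonempty → placeInFan (ordIndex J α) ≤ (n : Ordinal) → α ∈ I

/-- A collection `(I i)_{i < γ}` of subsets of `δ` is fan preserving. -/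
def FanPreserving (γ : Ordinal) (I : Ordinal → Set Ordinal) (δ : Ordinal) : Prop :=
  ∀ α ≤ γ, Order.IsSuccLimit α → ∀ β < δ, (∀ i < α, (fan β ∩ I i).Infinite) →
    (fan β ∩ ⋂ i ∈ Set.Iio α, I i).Infinite

/-- Sum of the first `i` terms `ω ^ γ` of a Cantor normal form list. -/
noncomputable def partialSum (l : List Ordinal) (i : ℕ) : Ordinal :=
  ((l.take i).map fun γ => Ordinal.omega0 ^ γ).sum

/-- The `i`-th component `C_i` of the Cantor normal form decomposition (for `1 ≤ i`). -/
noncomputable def comp (l : List Ordinal) (i : ℕ) : Set Ordinal :=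
  {β | partialSum l (i - 1) < β ∧ β ≤ partialSum l i}

/-- `subtree α` is `{α} ∪ {β : β ⊏ α}`. -/
def subtree (α : Ordinal) : Set Ordinal := insert α {β | treeOrd β α}

/-- `Tlevel α n` is the set of elements of CB rank `n` in the tree below `α`. -/
def Tlevel (α : Ordinal) (n : ℕ) : Set Ordinal := {β | β ∈ subtree α ∧ CB β = (n : Ordinal)}

/-- `FpowAux k r j = F(ω^k)^r_{k-j}`, defined by downward recursion. -/
noncomputable def FpowAux (k r : ℕ) : ℕ → Set Ordinal
  | 0 => {Ordinal.omega0 ^ (k : Ordinal)}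
  | j + 1 => {γ | treeSucc γ ∈ FpowAux k r j ∧ (r : Ordinal) < placeInFan γ}

/-- `F(ω^k)^r_n` (for `n ≤ k`). -/
noncomputable def Fpow (k r n : ℕ) : Set Ordinal := FpowAux k r (k - n)

/-- `F(α)^r_n`: the copy of `F(ω^k)^r_n` in the tree below `α`, where `k = CB α`. -/
noncomputable def Fgen (α : Ordinal) (r n : ℕ) : Set Ordinal :=
  {β | β ∈ subtree α ∧ ∃ k : ℕ, (k : Ordinal) = CB α ∧ ordIndex (subtree α) β ∈ Fpow k r n}

/-- The collection of `r`-large subsets of `Tlevel α n`. -/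
def LargeR (α : Ordinal) (r n : ℕ) : Set (Set Ordinal) :=
  {A | A ⊆ Tlevel α n ∧ Fgen α r n ⊆ A}

/-- The collection of large subsets of `Tlevel α n`. -/
def Large (α : Ordinal) (n : ℕ) : Set (Set Ordinal) := ⋃ r : ℕ, LargeR α r n

/-- The closed ordinal partition relation `β →_cl (α₀, α₁)²`. -/
def ClRamseyProp (β α₀ α₁ : Ordinal) : Prop :=
  ∀ c : Ordinal → Ordinal → Fin 2,
    ∃ i : Fin 2, ∃ X : Set Ordinal, X ⊆ Set.Iio β ∧
      otp X = (if i = 0 then α₀ else α₁) ∧ ClosedInSup X ∧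
      ∀ x ∈ X, ∀ y ∈ X, x < y → c x y = i

/-!
The Cantor–Bendixson rank of a nonzero `x` is the largest `γ` with `ω ^ γ ∣ x`. Hence the ordinals
of rank `γ` are the products `ω ^ γ * t` with `t` a successor ordinal (`ω ^ (γ + 1)` must not divide
them). One of them is `β + ω ^ γ = ω ^ γ * (β / ω ^ γ + 1)`, as the remainder `β % ω ^ γ` is
absorbed by `ω ^ γ`. When `CB β < γ`, the ordinal `β` itself does not have rank `γ`, so every
ordinal of rank `γ` above `β` is some `ω ^ γ * t > β`, whence `t > β / ω ^ γ` and
`ω ^ γ * t ≥ β + ω ^ γ`.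
-/

theorem CB_zero : CB 0 = 0 := by
  simp [CB, CNF.zero_right]

theorem CB_eq_log_of_mod_eq_zero {x : Ordinal} (hx : x ≠ 0) (hr : x % ω ^ log ω x = 0) :
    CB x = log ω x := by
  simp [CB, CNF.ne_zero hx, hr, CNF.zero_right]

theorem CB_eq_CB_mod_of_mod_ne_zero {x : Ordinal} (hx : x ≠ 0) (hr : x % ω ^ log ω x ≠ 0) :
    CB x = CB (x % ω ^ log ω x) := by
  unfold CB
  rw [CNF.ne_zero hx, CNF.ne_zero hr, List.getLast?_cons_cons, ← CNF.ne_zero hr]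

theorem opow_dvd_iff_le_CB {x : Ordinal} (hx : x ≠ 0) (γ : Ordinal) : ω ^ γ ∣ x ↔ γ ≤ CB x := by
  induction x using WellFoundedLT.induction generalizing γ with
  | _ x ih =>
    set e := log ω x
    set r := x % ω ^ e
    have hdecomp : ω ^ e * (x / ω ^ e) + r = x := div_add_mod x _
    have hle_log : ω ^ γ ∣ x → γ ≤ e := fun h ↦
      (opow_le_iff_le_log one_lt_omega0 hx).1 (le_of_dvd hx h)
    by_cases hr : r = 0
    · rw [CB_eq_log_of_mod_eq_zero hx hr]
      refine ⟨hle_log, fun hγ ↦ ?_⟩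
      rw [← hdecomp, hr, add_zero]
      exact (opow_dvd_opow ω hγ).mul_right _
    · have hdvd_head : γ ≤ e → ω ^ γ ∣ ω ^ e * (x / ω ^ e) := fun hγ ↦
        (opow_dvd_opow ω hγ).mul_right _
      rw [CB_eq_CB_mod_of_mod_ne_zero hx hr, ← ih r (mod_opow_log_lt_self ω hx) hr]
      constructor
      · intro h
        rw [← hdecomp] at h
        exact (dvd_add_iff (hdvd_head (hle_log (hdecomp ▸ h)))).1 h
      · intro h
        have hγe : γ < e := (opow_lt_opow_iff_right one_lt_omega0).1 <|
          (le_of_dvd hr h).trans_lt (mod_lt x (opow_ne_zero e omega0_ne_zero))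
        rw [← hdecomp]
        exact dvd_add (hdvd_head hγe.le) h

theorem add_omega0_opow_eq_mul (β γ : Ordinal) : β + ω ^ γ = ω ^ γ * (β / ω ^ γ + 1) := by
  conv_lhs => rw [← div_add_mod β (ω ^ γ)]
  rw [add_assoc, add_omega0_opow (mod_lt β (opow_ne_zero γ omega0_ne_zero)), mul_add_one]

theorem CB_add_omega0_opow (β γ : Ordinal) : CB (β + ω ^ γ) = γ := by
  have hpos : ω ^ γ ≠ 0 := opow_ne_zero γ omega0_ne_zero
  have hne : β + ω ^ γ ≠ 0 := (pos_iff_ne_zero.2 hpos).trans_le le_add_self |>.ne'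
  have hdvd : ω ^ γ ∣ β + ω ^ γ := ⟨_, add_omega0_opow_eq_mul β γ⟩
  refine le_antisymm (not_lt.1 fun hlt ↦ ?_) ((opow_dvd_iff_le_CB hne γ).1 hdvd)
  -- `ω ^ (γ + 1) ∣ ω ^ γ * (β / ω ^ γ + 1)` would make a successor ordinal divisible by `ω`
  have hdvd_succ := (opow_dvd_iff_le_CB hne (γ + 1)).2 (Order.add_one_le_of_lt hlt)
  rw [add_omega0_opow_eq_mul, opow_add, opow_one, mul_dvd_mul_iff_left hpos,
    ← isSuccPrelimit_iff_omega0_dvd] at hdvd_succ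
  exact Order.not_isSuccPrelimit_succ _ hdvd_succ

theorem add_omega0_opow_le {β x : Ordinal} (hβ : CB β < CB x) (hle : β ≤ x) :
    β + ω ^ CB x ≤ x := by
  have hx : x ≠ 0 := by
    rintro rfl
    simp [CB_zero] at hβ
  have hpos : ω ^ CB x ≠ 0 := opow_ne_zero _ omega0_ne_zero
  obtain ⟨t, ht⟩ := (opow_dvd_iff_le_CB hx (CB x)).2 le_rfl
  have hlt : β < ω ^ CB x * t := ht ▸ hle.lt_of_ne (by rintro rfl; exact hβ.ne rfl)
  calc β + ω ^ CB x = ω ^ CB x * (β / ω ^ CB x + 1) := add_omega0_opow_eq_mul β _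
    _ ≤ ω ^ CB x * t :=
      mul_le_mul_right (Order.add_one_le_of_lt ((lt_mul_iff_div_lt hpos).1 hlt)) _
    _ = x := ht.symm

theorem stmt4 (β α : Ordinal) :
    treeOrd β α ↔ ∃ γ : Ordinal, CB β < γ ∧ IsLeast {x : Ordinal | CB x = γ ∧ β ≤ x} α := by
  have hmem (γ : Ordinal) : β + ω ^ γ ∈ {x : Ordinal | CB x = γ ∧ β ≤ x} :=
    ⟨CB_add_omega0_opow β γ, le_self_add⟩
  have hlower {γ x : Ordinal} (hγ : CB β < γ) (hx : CB x = γ ∧ β ≤ x) : β + ω ^ γ ≤ x := by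
    obtain ⟨rfl, hle⟩ := hx
    exact add_omega0_opow_le hγ hle
  constructor
  · rintro ⟨γ, hγ, rfl⟩
    exact ⟨γ, hγ, hmem γ, fun x hx ↦ hlower hγ hx⟩
  · rintro ⟨γ, hγ, hα, hleast⟩
    exact ⟨γ, hγ, le_antisymm (hleast (hmem γ)) (hlower hγ hα)⟩
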